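/- arXiv:2402.17548 — 5 statements merged into one kernel-verified Lean document; each statement's English description precedes it below -/
import Mathlib

section
/- For every nonzero vector U ∈ ℝ⁴ and every vector V ∈ ℝ⁴ orthogonal to U, there exist real numbers γ₁,γ₂,γ₃ such that R(γ₁,γ₂,γ₃)·U = V. -/
/-!
Read ℝ⁴ as the quaternions. Then `R(γ₁,γ₂,γ₃) U` is the product `U * γ` with the pure quaternion
`γ = γ₁ i + γ₂ j + γ₃ k`, and `U ⬝ᵥ V` is the real part of `star U * V`. So for `U ≠ 0` the
quaternion `γ = U⁻¹ * V = star U * V / ‖U‖²` solves `U * γ = V`, and it is pure precisely because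
`U ⊥ V`.
-/

open Matrix

def Lmat (b1 b2 b3 : ℝ) : Matrix (Fin 4) (Fin 4) ℝ :=
  !![0, -b1, -b2, -b3;
     b1, 0, -b3, b2;
     b2, b3, 0, -b1;
     b3, -b2, b1, 0]

def Rmat (g1 g2 g3 : ℝ) : Matrix (Fin 4) (Fin 4) ℝ :=
  !![0, -g1, -g2, -g3;
     g1, 0, g3, -g2;
     g2, -g3, 0, g1;
     g3, g2, -g1, 0]

open Quaternion

section

variable {R : Type*} [Field R] [LinearOrder R] [IsStrictOrderedRing R]

theorem Quaternion.re_inv_mul (a b : ℍ[R]) : (a⁻¹ * b).re = (star a * b).re / normSq a := by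
  rw [inv_def, smul_mul_assoc, re_smul, smul_eq_mul, inv_mul_eq_div]

theorem Quaternion.exists_re_eq_zero_mul_eq {a b : ℍ[R]} (ha : a ≠ 0)
    (hab : (star a * b).re = 0) :
    ∃ q : ℍ[R], q.re = 0 ∧ a * q = b :=
  ⟨a⁻¹ * b, by rw [re_inv_mul, hab, zero_div], mul_inv_cancel_left₀ ha b⟩

end

theorem Quaternion.re_star_mul_eq_dotProduct {R : Type*} [CommRing R] (a b : ℍ[R]) :
    (star a * b).re = equivTuple R a ⬝ᵥ equivTuple R b := by
  simp [re_mul, dotProduct, Fin.sum_univ_four]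

theorem Rmat_mulVec_equivTuple (a q : ℍ[ℝ]) (hq : q.re = 0) :
    Rmat q.imI q.imJ q.imK *ᵥ equivTuple ℝ a = equivTuple ℝ (a * q) := by
  ext i
  fin_cases i <;>
    simp only [Rmat, mulVec, dotProduct, Fin.sum_univ_four, of_apply, cons_val', cons_val_fin_one,
      cons_val, cons_val_zero, cons_val_one, Fin.zero_eta, Fin.mk_one, Fin.reduceFinMk, Fin.isValue,
      equivTuple_apply, re_mul, imI_mul, imJ_mul, imK_mul, hq] <;>
    ring

/-- For any nonzero U ∈ ℝ⁴ and any V orthogonal to U there are γ₁,γ₂,γ₃ with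
R(γ₁,γ₂,γ₃)·U = V. -/
theorem stmt_4 (U V : Fin 4 → ℝ) (hU : U ≠ 0) (hUV : U ⬝ᵥ V = 0) :
    ∃ g1 g2 g3 : ℝ, Rmat g1 g2 g3 *ᵥ U = V := by
  obtain ⟨a, rfl⟩ := (equivTuple ℝ).surjective U
  obtain ⟨b, rfl⟩ := (equivTuple ℝ).surjective V
  have ha : a ≠ 0 := by
    rintro rfl
    exact hU (by ext i; fin_cases i <;> rfl)
  obtain ⟨q, hq, rfl⟩ := exists_re_eq_zero_mul_eq ha (by rwa [re_star_mul_eq_dotProduct])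
  exact ⟨q.imI, q.imJ, q.imK, Rmat_mulVec_equivTuple a q hq⟩
end

section
/- For every nonzero vector U ∈ ℝ⁴ and every vector V ∈ ℝ⁴ orthogonal to U, there exist real numbers β₁,β₂,β₃ such that L(β₁,β₂,β₃)·U = V. -/
open Matrix

/-!
`Lmat β₁ β₂ β₃` is left multiplication by the pure quaternion `β₁ i + β₂ j + β₃ k` on `ℍ ≅ ℝ⁴`.
For `U ≠ 0` the vectors `U, iU, jU, kU` are pairwise orthogonal, all of length `‖U‖`, so every
`V ⊥ U` expands as `V = ∑ ⟪eU, V⟫ / ‖U‖² · eU` over `e ∈ {i, j, k}`; cleared of denominators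
this is a polynomial identity in the coordinates of `U` and `V`.
-/

theorem Lmat_mul_eq_smul (c b1 b2 b3 : ℝ) : Lmat (c * b1) (c * b2) (c * b3) = c • Lmat b1 b2 b3 := by
  ext i j
  fin_cases i <;> fin_cases j <;> simp [Lmat]

theorem Lmat_mulVec_coeffs (U V : Fin 4 → ℝ) :
    Lmat ((Lmat 1 0 0 *ᵥ U) ⬝ᵥ V) ((Lmat 0 1 0 *ᵥ U) ⬝ᵥ V) ((Lmat 0 0 1 *ᵥ U) ⬝ᵥ V) *ᵥ U
      = (U ⬝ᵥ U) • V - (U ⬝ᵥ V) • U := by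
  ext i
  fin_cases i <;>
    simp only [Lmat, mulVec, dotProduct, Fin.sum_univ_four, of_apply, cons_val', cons_val_fin_one,
      cons_val_zero, cons_val_one, cons_val, Fin.isValue, Fin.zero_eta, Fin.mk_one, Fin.reduceFinMk,
      Pi.sub_apply, Pi.smul_apply, smul_eq_mul] <;> ring

/-- For any nonzero U ∈ ℝ⁴ and any V orthogonal to U there are β₁,β₂,β₃ with
L(β₁,β₂,β₃)·U = V. -/
theorem stmt_5 (U V : Fin 4 → ℝ) (hU : U ≠ 0) (hUV : U ⬝ᵥ V = 0) :
    ∃ b1 b2 b3 : ℝ, Lmat b1 b2 b3 *ᵥ U = V := by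
  have hUU : U ⬝ᵥ U ≠ 0 := fun h => hU (dotProduct_self_eq_zero.mp h)
  set c := (U ⬝ᵥ U)⁻¹
  refine ⟨c * ((Lmat 1 0 0 *ᵥ U) ⬝ᵥ V), c * ((Lmat 0 1 0 *ᵥ U) ⬝ᵥ V),
    c * ((Lmat 0 0 1 *ᵥ U) ⬝ᵥ V), ?_⟩
  rw [Lmat_mul_eq_smul, smul_mulVec, Lmat_mulVec_coeffs, hUV, zero_smul, sub_zero, smul_smul,
    inv_mul_cancel₀ hUU, one_smul]
end

section
/- Let U, V, W be n×n real skew-symmetric matrices with [U,V] = [U,W] = 0. If U has no nonzero eigenvalue of multiplicity ≥ 2 and the eigenvalue 0 of U has multiplicity ≤ 2 (all multiplicities counted over ℂ), then [V,W] = 0. -/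
/-!
`U²` is real symmetric and commutes with `V` and `W`, so in an orthonormal eigenbasis of `U²`
the matrices `V` and `W` stay skew-symmetric and become block diagonal along the eigenspaces
of `U²`. The eigenvalues of `U²` are the squares of those of `U`, so the multiplicity hypotheses
make every such block of size at most 2, and skew-symmetric matrices of size at most 2 commute.
-/

open Matrix Polynomial Finset

theorem Polynomial.rootMultiplicity_prod_X_sub_C {R ι : Type*} [CommRing R] [IsDomain R]
    [Fintype ι] [DecidableEq R] (f : ι → R) (a : R) :
    (∏ i, (X - C (f i))).rootMultiplicity a = #{i | f i = a} := by
  have h : ∏ i, (X - C (f i)) = ((univ.val.map f).map fun b => X - C b).prod := by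
    rw [Multiset.map_map]; rfl
  rw [← count_roots, h, roots_multiset_prod_X_sub_C, Multiset.count_map]
  simp only [eq_comm (a := a)]
  rfl

theorem Matrix.charpoly_conjStarAlgAut {R ι : Type*} [CommRing R] [StarRing R] [Fintype ι]
    [DecidableEq ι] (u : unitaryGroup ι R) (M : Matrix ι ι R) :
    (Unitary.conjStarAlgAut R _ u M).charpoly = M.charpoly := by
  rw [Unitary.conjStarAlgAut_apply, charpoly_mul_comm, ← Matrix.mul_assoc,
    Unitary.coe_star_mul_self, Matrix.one_mul]

theorem Matrix.exists_charpoly_eq_prod_of_conjTranspose_eq_neg {ι : Type*} [Fintype ι]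
    [DecidableEq ι] {A : Matrix ι ι ℂ} (hA : Aᴴ = -A) :
    ∃ d : ι → ℂ, A.charpoly = ∏ i, (X - C (d i)) ∧
      (A * A).charpoly = ∏ i, (X - C (d i ^ 2)) := by
  have hH : (Complex.I • A).IsHermitian := by
    rw [IsHermitian, conjTranspose_smul, hA, Complex.star_def, Complex.conj_I, smul_neg,
      neg_smul, neg_neg]
  set φ := Unitary.conjStarAlgAut ℂ _ hH.eigenvectorUnitary
  set d : ι → ℂ := fun i => -Complex.I * hH.eigenvalues i
  have hAd : A = φ (diagonal d) := by
    have h := congrArg (-Complex.I • ·) hH.spectral_theorem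
    simp only [smul_smul, neg_mul, Complex.I_mul_I, neg_neg, one_smul, ← map_smul] at h
    rw [h, ← diagonal_smul]
    rfl
  refine ⟨d, by rw [hAd, charpoly_conjStarAlgAut, charpoly_diagonal], ?_⟩
  rw [hAd, ← map_mul, charpoly_conjStarAlgAut, diagonal_mul_diagonal, charpoly_diagonal]
  simp only [sq]

theorem Finset.card_filter_sq_eq_le_two {R ι : Type*} [CommRing R] [NoZeroDivisors R]
    [DecidableEq R] [Fintype ι] {d : ι → R} (hmult : ∀ μ ≠ 0, #{i | d i = μ} ≤ 1)
    (hmult0 : #{i | d i = 0} ≤ 2) (c : R) : #{i | d i ^ 2 = c} ≤ 2 := by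
  classical
  by_cases hc : c = 0
  · simpa only [hc, pow_eq_zero_iff two_ne_zero] using hmult0
  by_cases hroot : ∃ i, d i ^ 2 = c
  · obtain ⟨i₀, rfl⟩ := hroot
    have hs : d i₀ ≠ 0 := fun h => hc (by rw [h, zero_pow two_ne_zero])
    simp only [sq_eq_sq_iff_eq_or_eq_neg]
    rw [filter_or]
    exact (card_union_le _ _).trans
      (add_le_add (hmult _ hs) (hmult _ (neg_ne_zero.mpr hs)))
  · simp [not_exists.mp hroot]

section Skew

variable {R ι : Type*} [CommRing R]

theorem Matrix.apply_eq_zero_of_commute_diagonal [Fintype ι] [DecidableEq ι] [NoZeroDivisors R]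
    {e : ι → R} {M : Matrix ι ι R} (h : Commute (diagonal e) M) {i j : ι}
    (hij : e i ≠ e j) : M i j = 0 := by
  have h' : e i * M i j = M i j * e j := by
    simpa [diagonal_mul, mul_diagonal] using congr_fun₂ h i j
  have : (e i - e j) * M i j = 0 := by linear_combination h'
  exact (mul_eq_zero.mp this).resolve_left (sub_ne_zero.mpr hij)

theorem Matrix.apply_self_eq_zero_of_transpose_eq_neg [IsAddTorsionFree R] {M : Matrix ι ι R}
    (h : Mᵀ = -M) (i : ι) : M i i = 0 :=
  self_eq_neg.mp (by simpa using congr_fun₂ h i i)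

theorem Matrix.apply_mul_apply_comm_of_transpose_eq_neg [IsAddTorsionFree R]
    {V W : Matrix ι ι R} (hV : Vᵀ = -V) (hW : Wᵀ = -W) {i k j : ι}
    (h : i = k ∨ k = j ∨ i = j) : V i k * W k j = W i k * V k j := by
  rcases h with rfl | rfl | rfl
  · simp [apply_self_eq_zero_of_transpose_eq_neg hV, apply_self_eq_zero_of_transpose_eq_neg hW]
  · simp [apply_self_eq_zero_of_transpose_eq_neg hV, apply_self_eq_zero_of_transpose_eq_neg hW]
  · have hV' : V k i = -V i k := by simpa using congr_fun₂ hV i k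
    have hW' : W k i = -W i k := by simpa using congr_fun₂ hW i k
    rw [hV', hW']
    ring

theorem Finset.eq_or_eq_or_eq_of_card_filter_le_two [Fintype ι] [DecidableEq ι] {α : Type*}
    [DecidableEq α] {e : ι → α} {i k j : ι} (he : #{l | e l = e i} ≤ 2) (hk : e k = e i)
    (hj : e j = e i) : i = k ∨ k = j ∨ i = j := by
  by_contra! h
  have hsub : {i, k, j} ⊆ ({l | e l = e i} : Finset ι) := by
    simp [insert_subset_iff, hk, hj]
  have := card_le_card hsub
  rw [card_eq_three.mpr ⟨i, k, j, h.1, h.2.2, h.2.1, rfl⟩] at this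
  omega

theorem Matrix.commute_of_transpose_eq_neg_of_commute_diagonal [Fintype ι] [DecidableEq ι]
    [DecidableEq R] [NoZeroDivisors R] [IsAddTorsionFree R] {e : ι → R}
    (he : ∀ c, #{i | e i = c} ≤ 2) {V W : Matrix ι ι R} (hV : Vᵀ = -V) (hW : Wᵀ = -W)
    (hVe : Commute (diagonal e) V) (hWe : Commute (diagonal e) W) : Commute V W := by
  -- termwise: a product `V i k * W k j` vanishes unless `i, k, j` lie in one block of size ≤ 2
  refine (Matrix.ext fun i j => ?_ : V * W = W * V)
  simp only [mul_apply]
  refine sum_congr rfl fun k _ => ?_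
  by_cases hik : e i = e k
  · by_cases hkj : e k = e j
    · exact apply_mul_apply_comm_of_transpose_eq_neg hV hW
        (eq_or_eq_or_eq_of_card_filter_le_two (he _) hik.symm (hik.trans hkj).symm)
    · rw [apply_eq_zero_of_commute_diagonal hVe hkj, apply_eq_zero_of_commute_diagonal hWe hkj,
        mul_zero, mul_zero]
  · rw [apply_eq_zero_of_commute_diagonal hVe hik, apply_eq_zero_of_commute_diagonal hWe hik,
      zero_mul, zero_mul]

end Skew

theorem Matrix.rootMultiplicity_charpoly_mul_self_le_two {ι : Type*} [Fintype ι] [DecidableEq ι]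
    {A : Matrix ι ι ℂ} (hA : Aᴴ = -A) (hmult : ∀ μ ≠ 0, A.charpoly.rootMultiplicity μ ≤ 1)
    (hmult0 : A.charpoly.rootMultiplicity 0 ≤ 2) (c : ℂ) :
    (A * A).charpoly.rootMultiplicity c ≤ 2 := by
  obtain ⟨d, hd, hdd⟩ := exists_charpoly_eq_prod_of_conjTranspose_eq_neg hA
  simp only [hd, rootMultiplicity_prod_X_sub_C] at hmult hmult0
  rw [hdd, rootMultiplicity_prod_X_sub_C]
  exact card_filter_sq_eq_le_two hmult hmult0 c

theorem Matrix.IsHermitian.commute_of_transpose_eq_neg {ι : Type*} [Fintype ι] [DecidableEq ι]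
    {S V W : Matrix ι ι ℝ} (hS : S.IsHermitian) (hmult : ∀ c, S.charpoly.rootMultiplicity c ≤ 2)
    (hV : Vᵀ = -V) (hW : Wᵀ = -W) (hSV : Commute S V) (hSW : Commute S W) : Commute V W := by
  set φ := Unitary.conjStarAlgAut ℝ _ hS.eigenvectorUnitary
  have hSφ : S = φ (diagonal hS.eigenvalues) := by simpa [φ] using hS.spectral_theorem
  have he : ∀ c, #{i | hS.eigenvalues i = c} ≤ 2 := fun c => by
    simpa [hS.charpoly_eq, rootMultiplicity_prod_X_sub_C] using hmult c
  have hconj : ∀ {M : Matrix ι ι ℝ}, Mᵀ = -M → Commute S M →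
      (φ.symm M)ᵀ = -φ.symm M ∧ Commute (diagonal hS.eigenvalues) (φ.symm M) := by
    intro M hM hSM
    refine ⟨?_, by simpa [hSφ] using hSM.map φ.symm⟩
    rw [← conjTranspose_eq_transpose_of_trivial, ← star_eq_conjTranspose, ← map_star,
      star_eq_conjTranspose, conjTranspose_eq_transpose_of_trivial, hM, map_neg]
  obtain ⟨hV', hVe⟩ := hconj hV hSV
  obtain ⟨hW', hWe⟩ := hconj hW hSW
  simpa using (commute_of_transpose_eq_neg_of_commute_diagonal he hV' hW' hVe hWe).map φ

/-- Let U, V, W be real skew-symmetric n×n matrices with [U,V] = [U,W] = 0.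
If no nonzero complex eigenvalue of U has algebraic multiplicity ≥ 2 and the
eigenvalue 0 has algebraic multiplicity ≤ 2, then [V,W] = 0. -/
theorem stmt_9 (n : ℕ) (U V W : Matrix (Fin n) (Fin n) ℝ)
    (hU : Uᵀ = -U) (hV : Vᵀ = -V) (hW : Wᵀ = -W)
    (hUV : U * V = V * U) (hUW : U * W = W * U)
    (hmult : ∀ μ : ℂ, μ ≠ 0 →
      ((U.map (algebraMap ℝ ℂ)).charpoly).rootMultiplicity μ ≤ 1)
    (hmult0 : ((U.map (algebraMap ℝ ℂ)).charpoly).rootMultiplicity 0 ≤ 2) :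
    V * W = W * V := by
  have hA : (U.map (algebraMap ℝ ℂ))ᴴ = -U.map (algebraMap ℝ ℂ) := by
    ext i j
    have h : U j i = -U i j := by simpa using congr_fun₂ hU i j
    simp [h]
  have hUU : (U * U).IsHermitian := by
    rw [IsHermitian, conjTranspose_eq_transpose_of_trivial, transpose_mul, hU, neg_mul_neg]
  have hmultUU : ∀ c : ℝ, (U * U).charpoly.rootMultiplicity c ≤ 2 := fun c => by
    rw [eq_rootMultiplicity_map (algebraMap ℝ ℂ).injective, ← charpoly_map, Matrix.map_mul]
    exact rootMultiplicity_charpoly_mul_self_le_two hA hmult hmult0 _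
  exact hUU.commute_of_transpose_eq_neg hmultUU hV hW
    (Commute.mul_left hUV hUV) (Commute.mul_left hUW hUW)
end

section
/- Let 𝔫 be a two-step nilpotent Lie algebra with center 𝔷 satisfying [𝔫,𝔫] ⊊ 𝔷, equipped with an inner product, and let 𝔳 be the orthogonal complement of 𝔷 in 𝔫. Then the semidirect-sum subspace 𝔫₁ = [𝔫,𝔫] ⊕ 𝔳 is a Lie subalgebra of 𝔫, its derived algebra is [𝔫₁,𝔫₁] = [𝔫,𝔫], and the center of 𝔫₁ equals [𝔫,𝔫]. -/
/-! Every bracket only sees the components of its arguments modulo the center `𝔷 = ker B`, so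
with `𝔳` complementary to `𝔷` all brackets are already brackets of elements of `𝔳`; this gives
`[𝔫₁, 𝔫₁] = [𝔫, 𝔫]`. An element of `𝔫₁` commuting with `𝔳` commutes with all of `𝔫`, hence lies in
`𝔷 ⊓ ([𝔫, 𝔫] ⊔ 𝔳) = [𝔫, 𝔫]` by the modular law, since `[𝔫, 𝔫] ≤ 𝔷` and `𝔷 ⊓ 𝔳 = 0`. -/

namespace LinearMap.IsRefl

variable {R M N : Type*} [CommRing R] [AddCommGroup M] [Module R M] [AddCommGroup N]
  [Module R N] {B : M →ₗ[R] M →ₗ[R] N} {v : Submodule R M}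

theorem apply_eq_of_sub_mem_ker (hB : B.IsRefl) {x x' y y' : M} (hx : x - x' ∈ ker B)
    (hy : y - y' ∈ ker B) : B x y = B x' y' := by
  have hleft : B (x - x') y = 0 := by rw [mem_ker.1 hx, zero_apply]
  have hright : B x' (y - y') = 0 := hB _ _ (by rw [mem_ker.1 hy, zero_apply])
  rw [map_sub, sub_apply, sub_eq_zero] at hleft
  rw [map_sub, sub_eq_zero] at hright
  rw [hleft, hright]

theorem exists_mem_sub_mem_ker (hv : ker B ⊔ v = ⊤) (x : M) : ∃ x' ∈ v, x - x' ∈ ker B := by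
  obtain ⟨a, ha, x', hx', rfl⟩ := Submodule.mem_sup.1 (hv ▸ Submodule.mem_top : x ∈ ker B ⊔ v)
  exact ⟨x', hx', by rwa [add_sub_cancel_right]⟩

theorem exists_mem_apply_eq (hB : B.IsRefl) (hv : ker B ⊔ v = ⊤) (x y : M) :
    ∃ x' ∈ v, ∃ y' ∈ v, B x y = B x' y' := by
  obtain ⟨x', hx', hxx'⟩ := exists_mem_sub_mem_ker hv x
  obtain ⟨y', hy', hyy'⟩ := exists_mem_sub_mem_ker hv y
  exact ⟨x', hx', y', hy', hB.apply_eq_of_sub_mem_ker hxx' hyy'⟩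

theorem span_apply_mem_eq_span_apply (hB : B.IsRefl) (hv : ker B ⊔ v = ⊤) {p : Submodule R M}
    (hvp : v ≤ p) :
    Submodule.span R {w | ∃ x ∈ p, ∃ y ∈ p, w = B x y} =
      Submodule.span R {w | ∃ x y : M, w = B x y} := by
  refine le_antisymm (Submodule.span_mono ?_) (Submodule.span_mono ?_)
  · rintro w ⟨x, -, y, -, rfl⟩
    exact ⟨x, y, rfl⟩
  · rintro w ⟨x, y, rfl⟩
    obtain ⟨x', hx', y', hy', hxy⟩ := hB.exists_mem_apply_eq hv x y
    exact ⟨x', hvp hx', y', hvp hy', hxy⟩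

theorem mem_ker_of_forall_mem_apply_eq_zero (hB : B.IsRefl) (hv : ker B ⊔ v = ⊤) {x : M}
    (hx : ∀ y ∈ v, B x y = 0) : x ∈ ker B := by
  refine mem_ker.2 (ext fun y => ?_)
  obtain ⟨y', hy', hyy'⟩ := exists_mem_sub_mem_ker hv y
  rw [hB.apply_eq_of_sub_mem_ker (sub_self x ▸ zero_mem _) hyy', hx y' hy', zero_apply]

theorem setOf_mem_sup_forall_apply_eq_zero (hB : B.IsRefl) (hv : IsCompl (ker B) v)
    {d : Submodule R M} (hd : d ≤ ker B) :
    {x | x ∈ d ⊔ v ∧ ∀ y ∈ d ⊔ v, B x y = 0} = (d : Set M) := by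
  ext x
  refine ⟨fun ⟨hxdv, hcomm⟩ => ?_, fun hx => ⟨Submodule.mem_sup_left hx, fun y _ => by
    rw [mem_ker.1 (hd hx), zero_apply]⟩⟩
  have hxker : x ∈ ker B :=
    hB.mem_ker_of_forall_mem_apply_eq_zero hv.sup_eq_top fun y hy => hcomm y (Submodule.mem_sup_right hy)
  have hmodular : (d ⊔ v) ⊓ ker B = d := by
    rw [sup_inf_assoc_of_le v hd, hv.symm.inf_eq_bot, sup_bot_eq]
  exact hmodular ▸ Submodule.mem_inf.2 ⟨hxdv, hxker⟩

end LinearMap.IsRefl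

theorem stmt_10_general (n : Type*) [NormedAddCommGroup n] [InnerProductSpace ℝ n]
    [FiniteDimensional ℝ n]
    (B : n →ₗ[ℝ] n →ₗ[ℝ] n) (halt : ∀ x : n, B x x = 0)
    (z : Submodule ℝ n) (hz : ∀ x : n, x ∈ z ↔ ∀ y : n, B x y = 0)
    (d : Submodule ℝ n) (hd : d = Submodule.span ℝ {w : n | ∃ x y : n, w = B x y})
    (hlt : d < z)
    (v : Submodule ℝ n) (hv : v = zᗮ)
    (n1 : Submodule ℝ n) (hn1 : n1 = d ⊔ v) :
    (∀ x ∈ n1, ∀ y ∈ n1, B x y ∈ n1) ∧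
    Submodule.span ℝ {w : n | ∃ x ∈ n1, ∃ y ∈ n1, w = B x y} = d ∧
    {x : n | x ∈ n1 ∧ ∀ y ∈ n1, B x y = 0} = (d : Set n) := by
  have hker : z = LinearMap.ker B := by
    ext x
    rw [hz, LinearMap.mem_ker, LinearMap.ext_iff]
    rfl
  have hB : B.IsRefl := LinearMap.IsAlt.isRefl halt
  have hcompl : IsCompl (LinearMap.ker B) v :=
    hker ▸ hv ▸ z.isCompl_orthogonal
  have hbracket : ∀ x y : n, B x y ∈ d := fun x y => hd ▸ Submodule.subset_span ⟨x, y, rfl⟩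
  subst hn1
  refine ⟨fun x _ y _ => Submodule.mem_sup_left (hbracket x y), ?_, ?_⟩
  · rw [hB.span_apply_mem_eq_span_apply hcompl.sup_eq_top le_sup_right, hd]
  · exact hB.setOf_mem_sup_forall_apply_eq_zero hcompl (hker ▸ hlt.le)

/-- Let 𝔫 be a two-step nilpotent real Lie algebra (bracket `B`, alternating,
with all triple brackets zero) carrying an inner product, with center 𝔷
strictly containing the derived algebra `d = [𝔫,𝔫]`, and let 𝔳 = 𝔷ᗮ.  Then
𝔫₁ = [𝔫,𝔫] ⊕ 𝔳 is a Lie subalgebra, its derived algebra is [𝔫₁,𝔫₁] = [𝔫,𝔫],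
and the center of 𝔫₁ equals [𝔫,𝔫]. -/
theorem stmt_10 (n : Type*) [NormedAddCommGroup n] [InnerProductSpace ℝ n]
    [FiniteDimensional ℝ n]
    (B : n →ₗ[ℝ] n →ₗ[ℝ] n) (halt : ∀ x : n, B x x = 0)
    (htwostep : ∀ x y z : n, B x (B y z) = 0)
    (z : Submodule ℝ n) (hz : ∀ x : n, x ∈ z ↔ ∀ y : n, B x y = 0)
    (d : Submodule ℝ n) (hd : d = Submodule.span ℝ {w : n | ∃ x y : n, w = B x y})
    (hlt : d < z)
    (v : Submodule ℝ n) (hv : v = zᗮ)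
    (n1 : Submodule ℝ n) (hn1 : n1 = d ⊔ v) :
    (∀ x ∈ n1, ∀ y ∈ n1, B x y ∈ n1) ∧
    Submodule.span ℝ {w : n | ∃ x ∈ n1, ∃ y ∈ n1, w = B x y} = d ∧
    {x : n | x ∈ n1 ∧ ∀ y ∈ n1, B x y = 0} = (d : Set n) :=
  stmt_10_general n B halt z hz d hd hlt v hv n1 hn1
end

section
/- Fix t ≥ 1 and for (x,y) ∈ ℝ² let J_{x,y} = diag(C₁, C₂) ∈ so(8), where C₁ has rows (0,0,-x,y),(0,0,y,x),(x,-y,0,0),(-y,-x,0,0) and C₂ has rows (0,0,-tx,y),(0,0,y,tx),(tx,-y,0,0),(-y,-tx,0,0). Then for every X ∈ ℝ⁸ and every (x,y) ∈ ℝ², there exist α₁,…,α₆ ∈ ℝ such that the matrix Y = diag(D₁,D₂) satisfies Y·X = J_{x,y}·X and Y·J_{x,y} = J_{x,y}·Y, where D₁ has rows (0,-α₁,-α₂,-α₃),(α₁,0,α₃,-α₂),(α₂,-α₃,0,α₁),(α₃,α₂,-α₁,0) and D₂ has rows (0,-α₄,-α₅,-α₆),(α₄,0,α₆,-α₅),(α₅,-α₆,0,α₄),(α₆,α₅,-α₄,0).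 -/
/-!
Identify `ℝ⁴` with `ℍ` via `Quaternion.equivTuple`. Then `C1 x y` is left multiplication by the
pure quaternion `b = x j - y k` and `Dmat α₁ α₂ α₃` is right multiplication by the pure quaternion
`α₁ i + α₂ j + α₃ k`, so the two commute by associativity. For `p ≠ 0` the quaternion
`α = p⁻¹ b p` is again pure (conjugation preserves the real part) and satisfies `p α = b p`.
Since `C2 t x y = C1 (t x) y`, both diagonal blocks of `J_{x,y}` are handled this way.
-/

open Matrix

def C1 (x y : ℝ) : Matrix (Fin 4) (Fin 4) ℝ :=
  !![0, 0, -x, y;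
     0, 0, y, x;
     x, -y, 0, 0;
     -y, -x, 0, 0]

def C2 (t x y : ℝ) : Matrix (Fin 4) (Fin 4) ℝ :=
  !![0, 0, -t * x, y;
     0, 0, y, t * x;
     t * x, -y, 0, 0;
     -y, -t * x, 0, 0]

def Dmat (a1 a2 a3 : ℝ) : Matrix (Fin 4) (Fin 4) ℝ :=
  !![0, -a1, -a2, -a3;
     a1, 0, a3, -a2;
     a2, -a3, 0, a1;
     a3, a2, -a1, 0]

/-- `J_{x,y} = diag(C₁, C₂) ∈ so(8)`. -/
def Jmat (t x y : ℝ) : Matrix (Fin 4 ⊕ Fin 4) (Fin 4 ⊕ Fin 4) ℝ :=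
  Matrix.fromBlocks (C1 x y) 0 0 (C2 t x y)

namespace Quaternion

variable {R : Type*}

theorem re_mul_comm [CommRing R] (p q : ℍ[R]) : (p * q).re = (q * p).re := by
  simp only [re_mul]
  ring

variable [Field R] [LinearOrder R] [IsStrictOrderedRing R]

theorem re_inv_mul_mul {p : ℍ[R]} (hp : p ≠ 0) (b : ℍ[R]) : (p⁻¹ * b * p).re = b.re := by
  rw [re_mul_comm, ← mul_assoc, mul_inv_cancel₀ hp, one_mul]

theorem exists_re_eq_zero_mul_eq_mul (p b : ℍ[R]) (hb : b.re = 0) :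
    ∃ a : ℍ[R], a.re = 0 ∧ p * a = b * p := by
  rcases eq_or_ne p 0 with rfl | hp
  · exact ⟨0, rfl, by simp⟩
  · refine ⟨p⁻¹ * b * p, by rw [re_inv_mul_mul hp, hb], ?_⟩
    rw [mul_assoc, mul_inv_cancel_left₀ hp]

end Quaternion

open Quaternion

-- A bare literal `⟨0, a, b, c⟩` elaborates at the unfolded type `ℍ[R,-1,0,-1]`, where the
-- multiplication of `ℍ[R]` is not found by instance search; this wrapper keeps the type `ℍ[R]`.
def pureQuaternion {R : Type*} [Zero R] [One R] [Neg R] (a b c : R) : ℍ[R] := ⟨0, a, b, c⟩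

section pureQuaternion

variable {R : Type*}

@[simp] theorem pureQuaternion_re [Zero R] [One R] [Neg R] (a b c : R) :
    (pureQuaternion a b c).re = 0 := rfl
@[simp] theorem pureQuaternion_imI [Zero R] [One R] [Neg R] (a b c : R) :
    (pureQuaternion a b c).imI = a := rfl
@[simp] theorem pureQuaternion_imJ [Zero R] [One R] [Neg R] (a b c : R) :
    (pureQuaternion a b c).imJ = b := rfl
@[simp] theorem pureQuaternion_imK [Zero R] [One R] [Neg R] (a b c : R) :
    (pureQuaternion a b c).imK = c := rfl

theorem eq_pureQuaternion_of_re_eq_zero [CommRing R] {q : ℍ[R]} (hq : q.re = 0) :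
    q = pureQuaternion q.imI q.imJ q.imK := by
  apply Quaternion.ext <;> simp [hq]

end pureQuaternion

theorem C1_mulVec_equivTuple (x y : ℝ) (p : ℍ[ℝ]) :
    C1 x y *ᵥ equivTuple ℝ p = equivTuple ℝ (pureQuaternion 0 x (-y) * p) := by
  ext i
  fin_cases i <;>
    simp [C1, mulVec, dotProduct, Fin.sum_univ_four, equivTuple_apply, re_mul, imI_mul, imJ_mul,
      imK_mul] <;> ring

theorem Dmat_mulVec_equivTuple (a1 a2 a3 : ℝ) (p : ℍ[ℝ]) :
    Dmat a1 a2 a3 *ᵥ equivTuple ℝ p = equivTuple ℝ (p * pureQuaternion a1 a2 a3) := by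
  ext i
  fin_cases i <;>
    simp [Dmat, mulVec, dotProduct, Fin.sum_univ_four, equivTuple_apply, re_mul, imI_mul, imJ_mul,
      imK_mul] <;> ring

theorem Dmat_mul_C1_comm (a1 a2 a3 x y : ℝ) :
    Dmat a1 a2 a3 * C1 x y = C1 x y * Dmat a1 a2 a3 := by
  refine ext_iff_mulVec.mpr fun v => ?_
  obtain ⟨p, rfl⟩ := (equivTuple ℝ).surjective v
  simp only [← mulVec_mulVec, C1_mulVec_equivTuple, Dmat_mulVec_equivTuple, mul_assoc]

theorem exists_Dmat_mulVec_eq_C1_mulVec (x y : ℝ) (u : Fin 4 → ℝ) :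
    ∃ a1 a2 a3 : ℝ, Dmat a1 a2 a3 *ᵥ u = C1 x y *ᵥ u := by
  obtain ⟨p, rfl⟩ := (equivTuple ℝ).surjective u
  obtain ⟨a, ha, hpa⟩ := exists_re_eq_zero_mul_eq_mul p (pureQuaternion 0 x (-y)) rfl
  refine ⟨a.imI, a.imJ, a.imK, ?_⟩
  rw [Dmat_mulVec_equivTuple, C1_mulVec_equivTuple, ← eq_pureQuaternion_of_re_eq_zero ha, hpa]

theorem C2_eq_C1 (t x y : ℝ) : C2 t x y = C1 (t * x) y := by
  ext i j
  fin_cases i <;> fin_cases j <;> simp [C1, C2]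

theorem stmt_18_general (t : ℝ) (X : Fin 4 ⊕ Fin 4 → ℝ) (x y : ℝ) :
    ∃ a1 a2 a3 a4 a5 a6 : ℝ,
      (Matrix.fromBlocks (Dmat a1 a2 a3) 0 0 (Dmat a4 a5 a6)) *ᵥ X
          = Jmat t x y *ᵥ X ∧
      (Matrix.fromBlocks (Dmat a1 a2 a3) 0 0 (Dmat a4 a5 a6)) * Jmat t x y
          = Jmat t x y * (Matrix.fromBlocks (Dmat a1 a2 a3) 0 0 (Dmat a4 a5 a6)) := by
  obtain ⟨a1, a2, a3, h1⟩ := exists_Dmat_mulVec_eq_C1_mulVec x y (X ∘ Sum.inl)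
  obtain ⟨a4, a5, a6, h2⟩ := exists_Dmat_mulVec_eq_C1_mulVec (t * x) y (X ∘ Sum.inr)
  refine ⟨a1, a2, a3, a4, a5, a6, ?_, ?_⟩
  · rw [Jmat, C2_eq_C1, fromBlocks_mulVec, fromBlocks_mulVec]
    simp [h1, h2]
  · rw [Jmat, C2_eq_C1, fromBlocks_multiply, fromBlocks_multiply]
    simp [Dmat_mul_C1_comm]

/-- For t ≥ 1, every X ∈ ℝ⁸ and every (x,y) ∈ ℝ², there are α₁,…,α₆ such that
Y = diag(D₁(α₁,α₂,α₃), D₂(α₄,α₅,α₆)) satisfies Y·X = J_{x,y}·X and commutes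
with J_{x,y}. -/
theorem stmt_18 (t : ℝ) (ht : 1 ≤ t) (X : Fin 4 ⊕ Fin 4 → ℝ) (x y : ℝ) :
    ∃ a1 a2 a3 a4 a5 a6 : ℝ,
      (Matrix.fromBlocks (Dmat a1 a2 a3) 0 0 (Dmat a4 a5 a6)) *ᵥ X
          = Jmat t x y *ᵥ X ∧
      (Matrix.fromBlocks (Dmat a1 a2 a3) 0 0 (Dmat a4 a5 a6)) * Jmat t x y
          = Jmat t x y * (Matrix.fromBlocks (Dmat a1 a2 a3) 0 0 (Dmat a4 a5 a6)) :=
  stmt_18_general t X x y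
end
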